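/- arXiv:1401.5139 — 2 statements merged into one kernel-verified Lean document; each statement's English description precedes it below -/
import Mathlib

section
/- Taylor remainder sum bound for second differences: if ρ : [0,T] → X is twice continuously differentiable and t_n = nk with (m+1)k ≤ T, then k·Σ_{n=1}^{m} ‖(ρ(t_{n+1}) − 2ρ(t_n) + ρ(t_{n-1}))/k²‖ ≤ 2·∫₀^{t_{m+1}} ‖ρ''(s)‖ ds. -/
/-!
The second difference `ρ(t + k) - 2ρ(t) + ρ(t - k)` is the increment of `s ↦ ρ(s + k) - ρ(s)` over
`[t - k, t]`. The derivative `ρ'(s + k) - ρ'(s)` of that function is at most `∫ ‖ρ''‖` over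
`[t - k, t + k]`, so by the mean value inequality the second difference is at most `k` times this
integral. Summing over `t = t_n`, each interval `[t_i, t_{i+1}] ⊆ [0, t_{m+1}]` is covered at
most twice.
-/

open Set Finset intervalIntegral MeasureTheory

section

variable {E : Type*} [NormedAddCommGroup E] [NormedSpace ℝ E]

/-- No completeness of `E` is needed: the fundamental theorem of calculus is applied in the
completion of `E`, which contains `E` isometrically. -/
theorem norm_sub_le_integral_norm_deriv {f f' : ℝ → E} {a b : ℝ} (hab : a ≤ b)
    (hf : ∀ t ∈ Icc a b, HasDerivAt f (f' t) t) (hf' : ContinuousOn f' (Icc a b)) :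
    ‖f b - f a‖ ≤ ∫ t in a..b, ‖f' t‖ := by
  let ι : E →L[ℝ] UniformSpace.Completion E := UniformSpace.Completion.toComplL
  have hι (x : E) : ‖ι x‖ = ‖x‖ := UniformSpace.Completion.norm_coe x
  have hftc : ι (f b) - ι (f a) = ∫ t in a..b, ι (f' t) := by
    refine (integral_eq_sub_of_hasDerivAt (f := fun t => ι (f t)) (fun t ht => ?_) ?_).symm
    · exact ι.hasFDerivAt.comp_hasDerivAt t (hf t (uIcc_of_le hab ▸ ht))
    · exact (ι.continuous.comp_continuousOn hf').intervalIntegrable_of_Icc hab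
  calc ‖f b - f a‖ = ‖∫ t in a..b, ι (f' t)‖ := by rw [← hftc, ← map_sub, hι]
    _ ≤ ∫ t in a..b, ‖ι (f' t)‖ := norm_integral_le_integral_norm hab
    _ = ∫ t in a..b, ‖f' t‖ := by simp only [hι]

theorem norm_second_difference_le {f f' f'' : ℝ → E} {x h : ℝ} (hh : 0 ≤ h)
    (hf : ∀ t ∈ Icc (x - h) (x + h), HasDerivAt f (f' t) t)
    (hf' : ∀ t ∈ Icc (x - h) (x + h), HasDerivAt f' (f'' t) t)
    (hf'' : ContinuousOn f'' (Icc (x - h) (x + h))) :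
    ‖f (x + h) - (2 : ℝ) • f x + f (x - h)‖ ≤ h * ∫ t in (x - h)..(x + h), ‖f'' t‖ := by
  have hshift : ∀ s ∈ Icc (x - h) x, Icc s (s + h) ⊆ Icc (x - h) (x + h) := fun s hs =>
    Icc_subset_Icc hs.1 (by linarith [hs.2])
  have hderiv : ∀ s ∈ Icc (x - h) x, HasDerivWithinAt (fun s => f (s + h) - f s)
      (f' (s + h) - f' s) (Icc (x - h) x) s := fun s hs =>
    (((hf (s + h) (hshift s hs ⟨by linarith, le_rfl⟩)).comp_add_const s h).sub
      (hf s (hshift s hs ⟨le_rfl, by linarith⟩))).hasDerivWithinAt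
  have hbound : ∀ s ∈ Ico (x - h) x, ‖f' (s + h) - f' s‖ ≤ ∫ t in (x - h)..(x + h), ‖f'' t‖ := by
    intro s hs
    have hsub := hshift s (Ico_subset_Icc_self hs)
    calc ‖f' (s + h) - f' s‖ ≤ ∫ t in s..(s + h), ‖f'' t‖ :=
          norm_sub_le_integral_norm_deriv (by linarith) (fun t ht => hf' t (hsub ht))
            (hf''.mono hsub)
      _ ≤ ∫ t in (x - h)..(x + h), ‖f'' t‖ :=
          integral_mono_interval hs.1 (by linarith) (by linarith [hs.2])
            (Filter.Eventually.of_forall fun _ => norm_nonneg _)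
            (hf''.norm.intervalIntegrable_of_Icc (by linarith))
  have key := norm_image_sub_le_of_norm_deriv_le_segment' hderiv hbound x
    ⟨by linarith, le_rfl⟩
  rw [sub_add_cancel, sub_sub_cancel] at key
  calc ‖f (x + h) - (2 : ℝ) • f x + f (x - h)‖
      = ‖f (x + h) - f x - (f x - f (x - h))‖ := by congr 1; module
    _ ≤ h * ∫ t in (x - h)..(x + h), ‖f'' t‖ := by rw [mul_comm]; exact key

theorem sum_integral_adjacent_pairs {f : ℝ → E} {μ : Measure ℝ} {a : ℕ → ℝ} {m : ℕ}
    (hf : ∀ i < m + 1, IntervalIntegrable f μ (a i) (a (i + 1))) :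
    ∑ i ∈ range m, ∫ x in a i..a (i + 2), f x ∂μ
      = (∫ x in a 0..a m, f x ∂μ) + ∫ x in a 1..a (m + 1), f x ∂μ := by
  have hsplit : ∀ i ∈ range m, ∫ x in a i..a (i + 2), f x ∂μ
      = (∫ x in a i..a (i + 1), f x ∂μ) + ∫ x in a (i + 1)..a (i + 1 + 1), f x ∂μ :=
    fun i hi => have hi := mem_range.1 hi
      (integral_add_adjacent_intervals (hf i (by omega)) (hf (i + 1) (by omega))).symm
  rw [sum_congr rfl hsplit, sum_add_distrib,
    sum_integral_adjacent_intervals fun i hi => hf i (by omega),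
    sum_integral_adjacent_intervals (a := fun i => a (i + 1)) fun i hi => hf (i + 1) (by omega)]

theorem sum_integral_adjacent_pairs_le {f : ℝ → ℝ} {μ : Measure ℝ} {a : ℕ → ℝ} {m : ℕ}
    (ha : Monotone a) (hf0 : 0 ≤ f) (hf : IntervalIntegrable f μ (a 0) (a (m + 1))) :
    ∑ i ∈ range m, ∫ x in a i..a (i + 2), f x ∂μ ≤ 2 * ∫ x in a 0..a (m + 1), f x ∂μ := by
  have hmem : ∀ i ≤ m + 1, a i ∈ uIcc (a 0) (a (m + 1)) := fun i hi =>
    uIcc_of_le (ha (Nat.zero_le _)) ▸ ⟨ha (Nat.zero_le _), ha hi⟩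
  rw [sum_integral_adjacent_pairs fun i hi =>
    hf.mono_set (uIcc_subset_uIcc (hmem i hi.le) (hmem (i + 1) hi))]
  have hpos : 0 ≤ᵐ[μ.restrict (Ioc (a 0) (a (m + 1)))] f := Filter.Eventually.of_forall hf0
  linarith [integral_mono_interval le_rfl (ha (Nat.zero_le m)) (ha m.le_succ) hpos hf,
    integral_mono_interval (ha (Nat.zero_le 1)) (ha (by omega)) le_rfl hpos hf]

end

theorem stmt9_general (X : Type*) [NormedAddCommGroup X] [NormedSpace ℝ X]
    (T k : ℝ) (hk : 0 < k) (m : ℕ) (hm : ((m : ℝ) + 1) * k ≤ T)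
    (ρ ρ' ρ'' : ℝ → X)
    (hρ : ∀ t ∈ Set.Icc (0:ℝ) T, HasDerivAt ρ (ρ' t) t)
    (hρ' : ∀ t ∈ Set.Icc (0:ℝ) T, HasDerivAt ρ' (ρ'' t) t)
    (hcont : ContinuousOn ρ'' (Set.Icc (0:ℝ) T)) :
    k * ∑ n ∈ Finset.Icc 1 m,
        ‖(1/k^2) • (ρ (((n:ℝ)+1)*k) - (2:ℝ) • ρ ((n:ℝ)*k) + ρ (((n:ℝ)-1)*k))‖
      ≤ 2 * ∫ s in (0:ℝ)..(((m:ℝ)+1)*k), ‖ρ'' s‖ := by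
  have hterm : ∀ n ∈ Finset.Icc 1 m,
      k * ‖(1/k^2) • (ρ (((n:ℝ)+1)*k) - (2:ℝ) • ρ ((n:ℝ)*k) + ρ (((n:ℝ)-1)*k))‖
        ≤ ∫ s in ((n:ℝ)-1)*k..((n:ℝ)+1)*k, ‖ρ'' s‖ := by
    intro n hn
    have hn1 : (1 : ℝ) ≤ n := by exact_mod_cast (Finset.mem_Icc.1 hn).1
    have hnm : (n : ℝ) ≤ m := by exact_mod_cast (Finset.mem_Icc.1 hn).2
    have hsub : Icc ((n:ℝ) * k - k) (n * k + k) ⊆ Icc 0 T :=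
      Icc_subset_Icc (by nlinarith) (by nlinarith)
    have h := norm_second_difference_le hk.le (fun t ht => hρ t (hsub ht))
      (fun t ht => hρ' t (hsub ht)) (hcont.mono hsub)
    rw [add_one_mul, sub_one_mul, norm_smul, Real.norm_of_nonneg (by positivity), ← mul_assoc]
    calc k * (1 / k ^ 2) * ‖_‖ ≤ k * (1 / k ^ 2) * (k * ∫ s in (n:ℝ)*k-k..n*k+k, ‖ρ'' s‖) :=
          mul_le_mul_of_nonneg_left h (by positivity)
      _ = _ := by field_simp
  have hint : IntervalIntegrable (fun s => ‖ρ'' s‖) volume 0 (((m:ℝ)+1)*k) :=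
    (hcont.mono (Icc_subset_Icc le_rfl hm)).norm.intervalIntegrable_of_Icc (by positivity)
  calc k * ∑ n ∈ Finset.Icc 1 m, ‖_‖
      = ∑ n ∈ Finset.Icc 1 m,
          k * ‖(1/k^2) • (ρ (((n:ℝ)+1)*k) - (2:ℝ) • ρ ((n:ℝ)*k) + ρ (((n:ℝ)-1)*k))‖ :=
        Finset.mul_sum _ _ _
    _ ≤ ∑ n ∈ Finset.Icc 1 m, ∫ s in ((n:ℝ)-1)*k..((n:ℝ)+1)*k, ‖ρ'' s‖ := sum_le_sum hterm
    _ = ∑ i ∈ range m, ∫ s in (i:ℝ)*k..((i + 2 : ℕ) : ℝ)*k, ‖ρ'' s‖ := by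
        rw [← Finset.Ico_add_one_right_eq_Icc, sum_Ico_eq_sum_range, Nat.add_sub_cancel]
        refine sum_congr rfl fun i _ => ?_
        push_cast
        ring_nf
    _ ≤ 2 * ∫ s in ((0 : ℕ) : ℝ)*k..((m + 1 : ℕ) : ℝ)*k, ‖ρ'' s‖ :=
        sum_integral_adjacent_pairs_le (a := fun i => (i : ℝ) * k)
          (Nat.mono_cast.mul_const hk.le) (fun _ => norm_nonneg _) (by simpa using hint)
    _ = 2 * ∫ s in (0:ℝ)..(((m:ℝ)+1)*k), ‖ρ'' s‖ := by push_cast; rw [zero_mul]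

/-- Taylor remainder sum bound for second differences:
`k Σ_{n=1}^{m} ‖(ρ(t_{n+1}) − 2ρ(t_n) + ρ(t_{n-1}))/k²‖ ≤ 2 ∫₀^{t_{m+1}} ‖ρ''‖`. -/
theorem stmt9 (X : Type*) [NormedAddCommGroup X] [NormedSpace ℝ X] [CompleteSpace X]
    (T k : ℝ) (hT : 0 < T) (hk : 0 < k) (m : ℕ) (hm : ((m : ℝ) + 1) * k ≤ T)
    (ρ ρ' ρ'' : ℝ → X)
    (hρ : ∀ t ∈ Set.Icc (0:ℝ) T, HasDerivAt ρ (ρ' t) t)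
    (hρ' : ∀ t ∈ Set.Icc (0:ℝ) T, HasDerivAt ρ' (ρ'' t) t)
    (hcont : ContinuousOn ρ'' (Set.Icc (0:ℝ) T)) :
    k * ∑ n ∈ Finset.Icc 1 m,
        ‖(1/k^2) • (ρ (((n:ℝ)+1)*k) - (2:ℝ) • ρ ((n:ℝ)*k) + ρ (((n:ℝ)-1)*k))‖
      ≤ 2 * ∫ s in (0:ℝ)..(((m:ℝ)+1)*k), ‖ρ'' s‖ :=
  stmt9_general X T k hk m hm ρ ρ' ρ'' hρ hρ' hcont
end

section
/- Coercivity plus CFL implies discrete positivity: let A be a symmetric bilinear form on a finite-dimensional space V with α‖v‖₁² ≤ A(v,v) ≤ Λ‖v‖₁² for norms ‖·‖₀, ‖·‖₁ on V satisfying an inverse inequality ‖v‖₁ ≤ C_inv h^{-1}‖v‖₀, and let c‖·‖₀² ≤ ⟨·,·⟩ be a second inner-product-type quadratic form on V. If k²/h² ≤ 4c/(Λ C_inv²), then for all ξ^m, ξ^{m+1} ∈ V, ⟨∂_t ξ^{m+1/2}, ∂_t ξ^{m+1/2}⟩ + A(ξ^{m+1}, ξ^m) ≥ min{c − Λ C_inv²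 k²/(4h²), α}·(‖∂_t ξ^{m+1/2}‖₀² + ‖ξ^{m+1/2}‖₁²) whenever the left factor is nonnegative, where ξ^{m+1/2} = (ξ^{m+1}+ξ^m)/2 and ∂_t ξ^{m+1/2} = (ξ^{m+1}−ξ^m)/k. -/
/-- Coercivity plus CFL implies discrete positivity of the energy. -/
theorem stmt14 (V : Type*) [AddCommGroup V] [Module ℝ V]
    (n0 n1 : V → ℝ) (hn0 : ∀ v, 0 ≤ n0 v) (hn1 : ∀ v, 0 ≤ n1 v)
    (h Cinv : ℝ) (hh : 0 < h) (hCinv : 0 < Cinv)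
    (hinv : ∀ v, n1 v ≤ Cinv / h * n0 v)
    (A : V →ₗ[ℝ] V →ₗ[ℝ] ℝ) (hAsymm : ∀ v w, A v w = A w v)
    (α Λ : ℝ) (hα : 0 < α) (hαΛ : α ≤ Λ)
    (hAcoer : ∀ v, α * n1 v ^ 2 ≤ A v v) (hAbdd : ∀ v, A v v ≤ Λ * n1 v ^ 2)
    (Q : V → ℝ) (c : ℝ) (hc : 0 < c) (hQ : ∀ v, c * n0 v ^ 2 ≤ Q v)
    (k : ℝ) (hk : 0 < k) (hCFL : k^2 / h^2 ≤ 4 * c / (Λ * Cinv^2))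
    (hnonneg : 0 ≤ c - Λ * Cinv^2 * k^2 / (4 * h^2))
    (ξ0 ξ1 : V) :
    Q ((1/k) • (ξ1 - ξ0)) + A ξ1 ξ0
      ≥ min (c - Λ * Cinv^2 * k^2 / (4 * h^2)) α
          * (n0 ((1/k) • (ξ1 - ξ0)) ^ 2 + n1 ((1/2 : ℝ) • (ξ1 + ξ0)) ^ 2) := by
  set dt : V := (1/k) • (ξ1 - ξ0) with hdt
  set m : V := (1/2 : ℝ) • (ξ1 + ξ0) with hm
  have hΛpos : 0 < Λ := lt_of_lt_of_le hα hαΛ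
  have h1 : ξ1 = m + (k/2) • dt := by
    rw [hdt, hm]; match_scalars <;> field_simp <;> ring
  have h0 : ξ0 = m - (k/2) • dt := by
    rw [hdt, hm]; match_scalars <;> field_simp <;> ring
  have hid : A ξ1 ξ0 = A m m - (k/2)^2 * A dt dt := by
    rw [h1, h0]
    simp only [map_add, map_sub, map_smul, LinearMap.add_apply, LinearMap.sub_apply,
      LinearMap.smul_apply, smul_eq_mul]
    rw [hAsymm dt m]
    ring
  have hAm : α * n1 m ^ 2 ≤ A m m := hAcoer m
  have hAdt : A dt dt ≤ Λ * (Cinv / h * n0 dt) ^ 2 := by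
    refine (hAbdd dt).trans ?_
    exact mul_le_mul_of_nonneg_left (pow_le_pow_left₀ (hn1 dt) (hinv dt) 2) hΛpos.le
  have hQdt : c * n0 dt ^ 2 ≤ Q dt := hQ dt
  have hmin1 : min (c - Λ * Cinv^2 * k^2 / (4 * h^2)) α ≤ c - Λ * Cinv^2 * k^2 / (4 * h^2) :=
    min_le_left _ _
  have hmin2 : min (c - Λ * Cinv^2 * k^2 / (4 * h^2)) α ≤ α := min_le_right _ _
  have hn0sq : 0 ≤ n0 dt ^ 2 := sq_nonneg _
  have hn1sq : 0 ≤ n1 m ^ 2 := sq_nonneg _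
  have hkey : (k/2)^2 * A dt dt ≤ Λ * Cinv^2 * k^2 / (4 * h^2) * n0 dt ^ 2 := by
    have hk2 : 0 ≤ (k/2)^2 := sq_nonneg _
    have := mul_le_mul_of_nonneg_left hAdt hk2
    calc (k/2)^2 * A dt dt ≤ (k/2)^2 * (Λ * (Cinv / h * n0 dt) ^ 2) := this
      _ = Λ * Cinv^2 * k^2 / (4 * h^2) * n0 dt ^ 2 := by field_simp; ring
  rw [hid]
  nlinarith [mul_le_mul_of_nonneg_right hmin1 hn0sq, mul_le_mul_of_nonneg_right hmin2 hn1sq]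
end
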